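/- Let $a, b, c$ with $b, c > 0$ and let $Q$ be a real symmetric traceless $3\times 3$ matrix. With $DF(Q)$ as in the Landau-de Gennes bulk potential, i.e. $DF(Q):Q = a|Q|^2 - b\,\mathrm{tr}(Q^3) + c|Q|^4$, one has $DF(Q):Q \geq \tfrac{c}{2}|Q|^2(|Q|^2 - \mu^2)$, where $\mu^2 = \tfrac{b^2}{c^2} - \tfrac{2a}{c}$. In particular, if $|Q|^2 \geq \mu^2$ then $DF(Q):Q \geq 0$. -/
import Mathlib

open Matrix Finset

section aux
variable {n : Type*} [Fintype n] [DecidableEq n]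

omit [DecidableEq n] in
lemma trace_sq_eq (Q : Matrix n n ℝ) (hsym : Q.IsSymm) :
    (Q * Q).trace = ∑ i, ∑ j, Q i j ^ 2 := by
  simp only [Matrix.trace, Matrix.diag, Matrix.mul_apply]
  exact Finset.sum_congr rfl fun i _ => Finset.sum_congr rfl fun j _ => by
    rw [hsym.apply i j, sq]

omit [DecidableEq n] in
lemma trace_cube_sq_le (Q : Matrix n n ℝ) (hsym : Q.IsSymm) :
    ((Q * Q * Q).trace) ^ 2 ≤ ((Q * Q).trace) ^ 3 := by
  have hQQ : (Q * Q).IsSymm := by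
    unfold Matrix.IsSymm
    rw [Matrix.transpose_mul, hsym]
  set t := ∑ i, ∑ j, Q i j ^ 2 with ht
  have ht0 : 0 ≤ t := Finset.sum_nonneg fun i _ => Finset.sum_nonneg fun j _ => sq_nonneg _
  have htp : t = ∑ p : n × n, Q p.1 p.2 ^ 2 := by rw [ht, Fintype.sum_prod_type]
  have htr2 : (Q * Q).trace = t := trace_sq_eq Q hsym
  have htr3 : (Q * Q * Q).trace = ∑ p : n × n, Q p.1 p.2 * (Q * Q) p.1 p.2 := by
    rw [Matrix.trace_mul_comm]
    simp only [Matrix.trace, Matrix.diag, Matrix.mul_apply (M := Q) (N := Q * Q),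
      Fintype.sum_prod_type]
    exact Finset.sum_congr rfl fun i _ => Finset.sum_congr rfl fun j _ => by
      rw [hQQ.apply i j]
  have hCS : ((Q * Q * Q).trace) ^ 2 ≤
      t * ∑ p : n × n, ((Q * Q) p.1 p.2) ^ 2 := by
    rw [htr3, htp]
    exact Finset.sum_mul_sq_le_sq_mul_sq Finset.univ _ _
  have hsub : ∑ p : n × n, ((Q * Q) p.1 p.2) ^ 2 ≤ t * t := by
    have hkey : ∀ p : n × n, ((Q * Q) p.1 p.2) ^ 2 ≤
        (∑ k, Q p.1 k ^ 2) * ∑ k, Q k p.2 ^ 2 := fun p => by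
      rw [Matrix.mul_apply]
      exact Finset.sum_mul_sq_le_sq_mul_sq Finset.univ _ _
    calc ∑ p : n × n, ((Q * Q) p.1 p.2) ^ 2
        ≤ ∑ p : n × n, (∑ k, Q p.1 k ^ 2) * ∑ k, Q k p.2 ^ 2 :=
          Finset.sum_le_sum fun p _ => hkey p
      _ = (∑ x, ∑ k, Q x k ^ 2) * (∑ y, ∑ k, Q k y ^ 2) := by
          rw [Finset.sum_mul_sum, Fintype.sum_prod_type]
      _ = t * t := by
          congr 1
          rw [Finset.sum_comm]
  calc ((Q * Q * Q).trace) ^ 2 ≤ t * (t * t) :=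
        hCS.trans (mul_le_mul_of_nonneg_left hsub ht0)
    _ = ((Q * Q).trace) ^ 3 := by rw [htr2]; ring

end aux

/-- For `b, c > 0` and symmetric traceless `Q`, with
`DF(Q):Q = a|Q|² - b tr(Q³) + c|Q|⁴` and `μ² = b²/c² - 2a/c`, one has
`DF(Q):Q ≥ (c/2)|Q|²(|Q|² - μ²)`; in particular if `|Q|² ≥ μ²` then
`DF(Q):Q ≥ 0`. -/
theorem DF_dot_Q_lower_bound
    (a b c : ℝ) (hb : 0 < b) (hc : 0 < c)
    (Q : Matrix (Fin 3) (Fin 3) ℝ) (hsym : Q.IsSymm) (htr : Q.trace = 0)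
    (DFQ : ℝ)
    (hDFQ : DFQ = a * (Q * Q).trace - b * (Q * Q * Q).trace
        + c * ((Q * Q).trace) ^ 2)
    (μsq : ℝ) (hμ : μsq = b ^ 2 / c ^ 2 - 2 * a / c) :
    c / 2 * (Q * Q).trace * ((Q * Q).trace - μsq) ≤ DFQ ∧
    (μsq ≤ (Q * Q).trace → 0 ≤ DFQ) := by
  set t := (Q * Q).trace with htdef
  set s := (Q * Q * Q).trace with hsdef
  have hs2 : s ^ 2 ≤ t ^ 3 := trace_cube_sq_le Q hsym
  have ht0 : 0 ≤ t := by
    rw [htdef, trace_sq_eq Q hsym]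
    exact Finset.sum_nonneg fun i _ => Finset.sum_nonneg fun j _ => sq_nonneg _
  have key : 2 * c * (b * s) ≤ c ^ 2 * t ^ 2 + b ^ 2 * t := by
    have hX : (0:ℝ) ≤ c ^ 2 * t ^ 2 + b ^ 2 * t := by positivity
    have hs2' : 4 * c ^ 2 * b ^ 2 * s ^ 2 ≤ 4 * c ^ 2 * b ^ 2 * t ^ 3 := by
      nlinarith [hs2, sq_nonneg (c * b)]
    nlinarith [hX, hs2', sq_nonneg (c ^ 2 * t ^ 2 - b ^ 2 * t)]
  have h2 : b * s ≤ (c ^ 2 * t ^ 2 + b ^ 2 * t) / (2 * c) := by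
    rw [le_div_iff₀ (by positivity)]
    linarith [key]
  have h3 : (c ^ 2 * t ^ 2 + b ^ 2 * t) / (2 * c) = c / 2 * t ^ 2 + b ^ 2 * t / (2 * c) := by
    field_simp
  have hexp : c / 2 * t * (t - μsq) = c / 2 * t ^ 2 - b ^ 2 * t / (2 * c) + a * t := by
    rw [hμ]
    field_simp
    ring
  have main : c / 2 * t * (t - μsq) ≤ DFQ := by
    rw [hDFQ, hexp]
    rw [h3] at h2
    linarith
  refine ⟨main, fun hge => ?_⟩
  have : 0 ≤ c / 2 * t * (t - μsq) := by
    apply mul_nonneg (mul_nonneg (by positivity) ht0)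
    linarith
  linarith
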